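/- For the sequence a with a_0=0, a_1=1, a_n = min{k < n : k + a_k ≥ n}: the number of arcs of the Jaco graph J_n(x) (f(x)=x) equals n(n+1)/2 − Σ_{i=1}^{n} a_i, since d⁺(v_i) = a_i and d⁺(v_i) + d⁻(v_i) = i for each i. -/

import Mathlib

/-- The sequence defined by `a 0 = 0`, `a 1 = 1`, and for `n ≥ 2`,
`a n = min { k < n : m * k + a k ≥ n }` (for `m = 1` this is the sequence `a` of the paper). -/
noncomputable def jseq (m : ℕ) (n : ℕ) : ℕ :=
  Nat.strongRecOn n (fun n ih =>
    if n = 0 then 0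
    else if n = 1 then 1
    else sInf {k : ℕ | ∃ h : k < n, n ≤ m * k + ih k h})

/-- In-degree of vertex `j` in the infinite linear Jaco graph for `f x = m * x + c`:
`d⁻(v_j)` is the number of tails `1 ≤ i < j` with `f i + i - d⁻(v_i) ≥ j`
(stated subtraction-free as `j + d⁻(v_i) ≤ m * i + c + i`). -/
noncomputable def jacoIndeg (m c : ℕ) (j : ℕ) : ℕ :=
  Nat.strongRecOn j (fun j ih =>
    ((Finset.Ico 1 j).attach.filter (fun i =>
      j + ih i.1 (Finset.mem_Ico.mp i.2).2 ≤ m * i.1 + c + i.1)).card)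

/-- `(v_i, v_j)` is an arc of the infinite Jaco graph `J_∞(mx + c)` iff `1 ≤ i < j` and
`f(i) + i - d⁻(v_i) ≥ j`. -/
def JacoArc (m c i j : ℕ) : Prop :=
  1 ≤ i ∧ i < j ∧ j + jacoIndeg m c i ≤ m * i + c + i

noncomputable instance (m c i j : ℕ) : Decidable (JacoArc m c i j) := by
  unfold JacoArc; infer_instance

/-- Out-degree of `v_i` in the infinite Jaco graph `J_∞(mx + c)`. -/
noncomputable def jacoOutdegInf (m c i : ℕ) : ℕ := {j | JacoArc m c i j}.ncard

/-- Out-degree of `v_i` in the finite Jaco graph `J_n(mx + c)`. -/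
noncomputable def jacoOutdeg (m c n i : ℕ) : ℕ :=
  ((Finset.Icc 1 n).filter (fun j => JacoArc m c i j)).card

/-- Total degree of `v_i` in the underlying graph of `J_n(mx + c)`
(for `i ≤ n` the in-degree in `J_n` agrees with that in `J_∞`). -/
noncomputable def jacoDeg (m c n i : ℕ) : ℕ := jacoIndeg m c i + jacoOutdeg m c n i

/-- Number of arcs of the finite Jaco graph `J_n(mx + c)`. -/
noncomputable def jacoArcs (m c n : ℕ) : ℕ :=
  (((Finset.Icc 1 n) ×ˢ (Finset.Icc 1 n)).filter (fun p => JacoArc m c p.1 p.2)).card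

section JacoAux
open Finset

/-! Write `d i` for the in-degree of `v_i`. Since `d (j + 1) ≤ d j + 1`, the reach `2 i - d i` of
`v_i` is monotone in `i`, so the tails of the arcs into `v_n` form an interval `[k₀, n)`, where `k₀`
is the least `k` with `n ≤ 2 k - d k`. By strong induction `k - d k = a k` for `k < n`, so `k₀ = a n`
and `d n = n - a n`. Counting the arcs of `J_n(x)` by their heads gives `Σ d j = n(n+1)/2 - Σ a j`. -/

open Finset

lemma card_filter_Ico_add_sInf {P : ℕ → Prop} [DecidablePred P] {a n : ℕ}
    (hP : ∀ i j, P i → i ≤ j → j < n → P j) (hbound : ∀ k, P k → a ≤ k ∧ k < n)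
    (hne : ∃ k, P k) : #{k ∈ Ico a n | P k} + sInf {k | P k} = n := by
  have hmin : P (sInf {k | P k}) := Nat.sInf_mem hne
  have hfilter : {k ∈ Ico a n | P k} = Ico (sInf {k | P k}) n := by
    ext k
    simp only [mem_filter, mem_Ico]
    constructor
    · rintro ⟨⟨-, hkn⟩, hk⟩
      exact ⟨Nat.sInf_le hk, hkn⟩
    · rintro ⟨hle, hkn⟩
      exact ⟨⟨(hbound _ hmin).1.trans hle, hkn⟩, hP _ k hmin hle hkn⟩
  rw [hfilter, Nat.card_Ico]
  have := (hbound _ hmin).2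
  omega

lemma sum_Icc_one_id_mul_two (n : ℕ) : (∑ i ∈ Icc 1 n, i) * 2 = n * (n + 1) := by
  induction n with
  | zero => simp
  | succ n ih =>
    rw [sum_Icc_succ_top (by omega), add_mul, ih]
    ring

lemma jseq_eq (m n : ℕ) :
    jseq m n =
      if n = 0 then 0
      else if n = 1 then 1
      else sInf {k : ℕ | ∃ _ : k < n, n ≤ m * k + jseq m k} := by
  rw [jseq, Nat.strongRecOn, WellFounded.fix_eq]
  rfl

lemma jacoIndeg_eq_card_filter (m c j : ℕ) :
    jacoIndeg m c j = #{i ∈ Ico 1 j | JacoArc m c i j} := by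
  have hunfold : jacoIndeg m c j = #{i ∈ Ico 1 j | j + jacoIndeg m c i ≤ m * i + c + i} := by
    conv_lhs => rw [jacoIndeg, Nat.strongRecOn, WellFounded.fix_eq]
    exact (congrArg card (filter_attach (fun i => j + jacoIndeg m c i ≤ m * i + c + i) _)).trans
      ((card_map _).trans (card_attach))
  rw [hunfold]
  congr 1
  refine filter_congr fun i hi => ?_
  simp only [mem_Ico] at hi
  simp only [JacoArc]
  omega

lemma jacoIndeg_le_pred (m c j : ℕ) : jacoIndeg m c j ≤ j - 1 := by
  rw [jacoIndeg_eq_card_filter, ← Nat.card_Ico 1 j]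
  exact card_filter_le _ _

lemma jacoIndeg_succ_le (m c j : ℕ) : jacoIndeg m c (j + 1) ≤ jacoIndeg m c j + 1 := by
  rw [jacoIndeg_eq_card_filter, jacoIndeg_eq_card_filter]
  refine (card_le_card fun i hi => ?_).trans (card_insert_le j _)
  simp only [mem_insert, mem_filter, mem_Ico] at hi ⊢
  unfold JacoArc at hi ⊢
  omega

lemma jacoIndeg_le_add_sub (m c : ℕ) {i j : ℕ} (hij : i ≤ j) :
    jacoIndeg m c j ≤ jacoIndeg m c i + (j - i) := by
  induction j, hij using Nat.le_induction with
  | base => omega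
  | succ k hik ih => have := jacoIndeg_succ_le m c k; omega

lemma JacoArc.of_le {m c i j n : ℕ} (h : JacoArc m c i n) (hij : i ≤ j) (hjn : j < n) :
    JacoArc m c j n := by
  obtain ⟨hi, -, hreach⟩ := h
  have := jacoIndeg_le_add_sub m c hij
  have := Nat.mul_le_mul_left m hij
  exact ⟨hi.trans hij, hjn, by omega⟩

lemma jacoArc_succ {m : ℕ} (c : ℕ) (hm : 1 ≤ m) {j : ℕ} (hj : 1 ≤ j) :
    JacoArc m c j (j + 1) := by
  have := jacoIndeg_le_pred m c j
  have := Nat.le_mul_of_pos_left j hm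
  exact ⟨hj, by omega, by omega⟩

lemma jacoOutdegInf_eq (m c : ℕ) {i : ℕ} (hi : 1 ≤ i) :
    jacoOutdegInf m c i = m * i + c - jacoIndeg m c i := by
  have hset : {j | JacoArc m c i j} = ↑(Ioc i (m * i + c + i - jacoIndeg m c i)) := by
    ext j
    simp only [JacoArc, Set.mem_ofPred_eq, coe_Ioc, Set.mem_Ioc]
    omega
  rw [jacoOutdegInf, hset, Set.ncard_coe_finset, Nat.card_Ioc]
  omega

lemma jacoArcs_eq_sum_jacoIndeg (m c n : ℕ) :
    jacoArcs m c n = ∑ j ∈ Icc 1 n, jacoIndeg m c j := by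
  rw [jacoArcs, card_filter, sum_product_right]
  refine sum_congr rfl fun j hj => ?_
  rw [← card_filter, jacoIndeg_eq_card_filter]
  congr 1
  ext i
  simp only [mem_Icc] at hj
  simp only [mem_filter, mem_Icc, mem_Ico]
  unfold JacoArc
  omega

lemma jseq_one_add_jacoIndeg (n : ℕ) : jseq 1 n + jacoIndeg 1 0 n = n := by
  induction n using Nat.strong_induction_on with
  | _ n ih =>
  obtain hn | hn := lt_or_ge n 2
  · interval_cases n <;> simp [jseq_eq, jacoIndeg_eq_card_filter]
  have hset : {k | ∃ _ : k < n, n ≤ 1 * k + jseq 1 k} = {k | JacoArc 1 0 k n} := by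
    ext k
    simp only [Set.mem_ofPred_eq, JacoArc, exists_prop]
    constructor
    · rintro ⟨hk, hreach⟩
      have := ih k hk
      omega
    · rintro ⟨-, hk, hreach⟩
      have := ih k hk
      exact ⟨hk, by omega⟩
  have hpred : JacoArc 1 0 (n - 1) n := by
    have := jacoArc_succ 0 le_rfl (by omega : 1 ≤ n - 1)
    rwa [Nat.sub_add_cancel (by omega : 1 ≤ n)] at this
  rw [jseq_eq, if_neg (by omega), if_neg (by omega), hset, jacoIndeg_eq_card_filter, add_comm]
  exact card_filter_Ico_add_sInf (fun i j h hij hjn => h.of_le hij hjn) (fun k hk => ⟨hk.1, hk.2.1⟩)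
    ⟨n - 1, hpred⟩

/-- For `f(x) = x`: `d⁺(v_i) = a_i` and `d⁺(v_i) + d⁻(v_i) = i` in `J_∞(x)`,
and hence `ε(J_n(x)) = n(n+1)/2 - Σ_{i=1}^{n} a_i`. -/
theorem jaco_arcs_via_a (n : ℕ) :
    (∀ i : ℕ, 1 ≤ i → jacoOutdegInf 1 0 i = jseq 1 i ∧
        jacoOutdegInf 1 0 i + jacoIndeg 1 0 i = i) ∧
      jacoArcs 1 0 n = n * (n + 1) / 2 - ∑ i ∈ Finset.Icc 1 n, jseq 1 i := by
  refine ⟨fun i hi => ?_, ?_⟩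
  · have := jacoOutdegInf_eq 1 0 hi
    have := jseq_one_add_jacoIndeg i
    omega
  · have hsum : ∑ i ∈ Icc 1 n, jseq 1 i + ∑ i ∈ Icc 1 n, jacoIndeg 1 0 i = ∑ i ∈ Icc 1 n, i := by
      rw [← sum_add_distrib]
      exact sum_congr rfl fun i _ => jseq_one_add_jacoIndeg i
    have := sum_Icc_one_id_mul_two n
    rw [jacoArcs_eq_sum_jacoIndeg]
    omega
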